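/- In the setting of the cup product ∪_{r,h} : E₁• ⊗ E₂• → E₃• on cones (Eᵢ• = cone(Aᵢ• ⊕ Bᵢ• → Cᵢ•)[−1]), for any r₁, r₂ ∈ R the map k : E₁• ⊗ E₂• → E₃•[−1] given by k((a_n,b_n,c_{n−1}) ⊗ (a'_m,b'_m,c'_{m−1})) = (0, 0, (−1)^n (r₁ − r₂) c_{n−1} ∪_C c'_{m−1}) defines a homotopy between ∪_{r₁,h} and ∪_{r₂,h}. -/
import Mathlib


/-- A cochain complex of `R`-modules indexed by `ℤ`. -/
structure Cx (R : Type) [CommRing R] where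
  X : ℤ → Type
  [ab : ∀ n, AddCommGroup (X n)]
  [md : ∀ n, Module R (X n)]
  d : ∀ n, X n →ₗ[R] X (n + 1)
  dsq : ∀ n (x : X n), d (n + 1) (d n x) = 0

attribute [instance] Cx.ab Cx.md

/-- A morphism of complexes of `R`-modules. -/
structure Mor {R : Type} [CommRing R] (A B : Cx R) where
  f : ∀ n, A.X n →ₗ[R] B.X n
  comm : ∀ n (x : A.X n), B.d n (f n x) = f (n + 1) (A.d n x)

/-- The differential of the total complex `T•(A•) = Tot(A• --(φ-1)--> A•)`.
Here `T^{n+1}(A) = Aⁿ ⊕ Aⁿ⁺¹` and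
`d(a_{n}, a_{n+1}) = (d a_n + (-1)^{n+1} (φ-1) a_{n+1}, d a_{n+1})`. -/
def Td {R : Type} [CommRing R] (A : Cx R) (φ : Mor A A) (n : ℤ)
    (p : A.X n × A.X (n + 1)) : A.X (n + 1) × A.X (n + 1 + 1) :=
  (A.d n p.1 + (Int.negOnePow (n + 1) : ℤ) • (φ.f (n + 1) p.2 - p.2),
    A.d (n + 1) p.2)

/-- The map induced on total complexes by a morphism `α` (componentwise). -/
def Tmor {R : Type} [CommRing R] {A B : Cx R} (α : Mor A B) (n : ℤ)
    (p : A.X n × A.X (n + 1)) : B.X n × B.X (n + 1) :=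
  (α.f n p.1, α.f (n + 1) p.2)
/-- A morphism of complexes `A• ⊗ B• → C•`, given by its bilinear components
`Aⁿ ⊗ Bᵐ → Cⁿ⁺ᵐ` satisfying the Leibniz rule
`d(x ∪ y) = dx ∪ y + (-1)ⁿ x ∪ dy`. -/
structure Cup {R : Type} [CommRing R] (A B C : Cx R) where
  c : ∀ n m k, n + m = k → A.X n →ₗ[R] B.X m →ₗ[R] C.X k
  leib : ∀ (n m k : ℤ) (hk : n + m = k) (x : A.X n) (y : B.X m),
    C.d k (c n m k hk x y)
      = c (n + 1) m (k + 1) (by omega) (A.d n x) y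
        + (Int.negOnePow n : ℤ) • c n (m + 1) (k + 1) (by omega) x (B.d m y)

/-- The cup product `∪ᵀ : T•(A₁•) ⊗ T•(A₂•) → T•(A₃•)` induced by
`∪ : A₁• ⊗ A₂• → A₃•`:
`(x_{n}, x_{n+1}) ∪ᵀ (y_{m}, y_{m+1}) =
  (x_{n+1} ∪ y_m + (-1)^{m+1} x_n ∪ φ₂(y_{m+1}), x_{n+1} ∪ y_{m+1})`. -/
def cupT {R : Type} [CommRing R] {A₁ A₂ A₃ : Cx R} (φ₂ : Mor A₂ A₂)
    (cup : Cup A₁ A₂ A₃) (n m k : ℤ) (hk : n + m = k)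
    (p : A₁.X n × A₁.X (n + 1)) (q : A₂.X m × A₂.X (m + 1)) :
    A₃.X (k + 1) × A₃.X (k + 1 + 1) :=
  (cup.c (n + 1) m (k + 1) (by omega) p.2 q.1
      + (Int.negOnePow (m + 1) : ℤ) •
          cup.c n (m + 1) (k + 1) (by omega) p.1 (φ₂.f (m + 1) q.2),
    cup.c (n + 1) (m + 1) (k + 1 + 1) (by omega) p.2 q.2)

/-- The differential of `Eᵢ• = cone(Aᵢ• ⊕ Bᵢ• --(f-g)--> Cᵢ•)[-1]`:
`E^{n+1} = Aⁿ⁺¹ ⊕ Bⁿ⁺¹ ⊕ Cⁿ` and `d(a,b,c) = (da, db, -f(a)+g(b)-dc)`. -/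
def Ed {R : Type} [CommRing R] {A B C : Cx R} (f : Mor A C) (g : Mor B C) (n : ℤ)
    (p : A.X (n + 1) × B.X (n + 1) × C.X n) :
    A.X (n + 1 + 1) × B.X (n + 1 + 1) × C.X (n + 1) :=
  (A.d (n + 1) p.1, B.d (n + 1) p.2.1,
    -f.f (n + 1) p.1 + g.f (n + 1) p.2.1 - C.d n p.2.2)

/-- The cup product `∪_{r,h} : E₁• ⊗ E₂• → E₃•` of Nekovář–Nizioł:
`(a,b,c) ∪_{r,h} (a',b',c') = (a ∪_A a', b ∪_B b',
   c ∪_C (r f₂(a') + (1-r) g₂(b'))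
   + (-1)^{deg} ((1-r) f₁(a) + r g₁(b)) ∪_C c'
   - (h_f(a ⊗ a') - h_g(b ⊗ b')))`. -/
def cupE {R : Type} [CommRing R]
    {A₁ A₂ A₃ B₁ B₂ B₃ C₁ C₂ C₃ : Cx R}
    (f₁ : Mor A₁ C₁) (f₂ : Mor A₂ C₂) (g₁ : Mor B₁ C₁) (g₂ : Mor B₂ C₂)
    (cupA : Cup A₁ A₂ A₃) (cupB : Cup B₁ B₂ B₃) (cupC : Cup C₁ C₂ C₃)
    (hf : ∀ n m k, n + m = k + 1 → A₁.X n →ₗ[R] A₂.X m →ₗ[R] C₃.X k)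
    (hg : ∀ n m k, n + m = k + 1 → B₁.X n →ₗ[R] B₂.X m →ₗ[R] C₃.X k)
    (r : R) (n m k : ℤ) (hk : n + m = k)
    (p : A₁.X (n + 1) × B₁.X (n + 1) × C₁.X n)
    (q : A₂.X (m + 1) × B₂.X (m + 1) × C₂.X m) :
    A₃.X (k + 1 + 1) × B₃.X (k + 1 + 1) × C₃.X (k + 1) :=
  (cupA.c (n + 1) (m + 1) (k + 1 + 1) (by omega) p.1 q.1,
    cupB.c (n + 1) (m + 1) (k + 1 + 1) (by omega) p.2.1 q.2.1,
    cupC.c n (m + 1) (k + 1) (by omega) p.2.2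
        (r • f₂.f (m + 1) q.1 + (1 - r) • g₂.f (m + 1) q.2.1)
      + (Int.negOnePow (n + 1) : ℤ) •
          cupC.c (n + 1) m (k + 1) (by omega)
            ((1 - r) • f₁.f (n + 1) p.1 + r • g₁.f (n + 1) p.2.1) q.2.2
      - (hf (n + 1) (m + 1) (k + 1) (by omega) p.1 q.1
          - hg (n + 1) (m + 1) (k + 1) (by omega) p.2.1 q.2.1))

/-- The map `k : E₁• ⊗ E₂• → E₃•[-1]`,
`k((a,b,c) ⊗ (a',b',c')) = (0, 0, (-1)^{deg} (r₁ - r₂) c ∪_C c')`. -/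
def kmap {R : Type} [CommRing R]
    {A₁ A₂ A₃ B₁ B₂ B₃ C₁ C₂ C₃ : Cx R}
    (cupA : Cup A₁ A₂ A₃) (cupB : Cup B₁ B₂ B₃) (cupC : Cup C₁ C₂ C₃)
    (r₁ r₂ : R) (n m k : ℤ) (hk : n + m = k)
    (p : A₁.X (n + 1) × B₁.X (n + 1) × C₁.X n)
    (q : A₂.X (m + 1) × B₂.X (m + 1) × C₂.X m) :
    A₃.X (k + 1) × B₃.X (k + 1) × C₃.X k :=
  (0, 0, (Int.negOnePow (n + 1) : ℤ) • ((r₁ - r₂) • cupC.c n m k hk p.2.2 q.2.2))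

/-- For any `r₁, r₂ ∈ R`, the map `k` defines a homotopy
`k : ∪_{r₁,h} ⇝ ∪_{r₂,h}` between the cup products on cones. -/
theorem statement5 {R : Type} [CommRing R]
    (A₁ A₂ A₃ B₁ B₂ B₃ C₁ C₂ C₃ : Cx R)
    (f₁ : Mor A₁ C₁) (f₂ : Mor A₂ C₂) (f₃ : Mor A₃ C₃)
    (g₁ : Mor B₁ C₁) (g₂ : Mor B₂ C₂) (g₃ : Mor B₃ C₃)
    (cupA : Cup A₁ A₂ A₃) (cupB : Cup B₁ B₂ B₃) (cupC : Cup C₁ C₂ C₃)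
    (hf : ∀ n m k, n + m = k + 1 → A₁.X n →ₗ[R] A₂.X m →ₗ[R] C₃.X k)
    (hg : ∀ n m k, n + m = k + 1 → B₁.X n →ₗ[R] B₂.X m →ₗ[R] C₃.X k)
    (hfhom : ∀ (n m k : ℤ) (e : n + m = k + 1) (x : A₁.X n) (y : A₂.X m),
      C₃.d k (hf n m k e x y)
          + hf (n + 1) m (k + 1) (by omega) (A₁.d n x) y
          + (Int.negOnePow n : ℤ) • hf n (m + 1) (k + 1) (by omega) x (A₂.d m y)
        = f₃.f (k + 1) (cupA.c n m (k + 1) (by omega) x y)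
            - cupC.c n m (k + 1) (by omega) (f₁.f n x) (f₂.f m y))
    (hghom : ∀ (n m k : ℤ) (e : n + m = k + 1) (x : B₁.X n) (y : B₂.X m),
      C₃.d k (hg n m k e x y)
          + hg (n + 1) m (k + 1) (by omega) (B₁.d n x) y
          + (Int.negOnePow n : ℤ) • hg n (m + 1) (k + 1) (by omega) x (B₂.d m y)
        = g₃.f (k + 1) (cupB.c n m (k + 1) (by omega) x y)
            - cupC.c n m (k + 1) (by omega) (g₁.f n x) (g₂.f m y))
    (r₁ r₂ : R) :
    ∀ (n m k : ℤ) (hk : n + m = k)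
      (p : A₁.X (n + 1) × B₁.X (n + 1) × C₁.X n)
      (q : A₂.X (m + 1) × B₂.X (m + 1) × C₂.X m),
      Ed f₃ g₃ k (kmap cupA cupB cupC r₁ r₂ n m k hk p q)
          + kmap cupA cupB cupC r₁ r₂ (n + 1) m (k + 1) (by omega) (Ed f₁ g₁ n p) q
          + (Int.negOnePow (n + 1) : ℤ) •
              kmap cupA cupB cupC r₁ r₂ n (m + 1) (k + 1) (by omega) p (Ed f₂ g₂ m q)
        = cupE f₁ f₂ g₁ g₂ cupA cupB cupC hf hg r₂ n m k hk p q
            - cupE f₁ f₂ g₁ g₂ cupA cupB cupC hf hg r₁ n m k hk p q := by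
  intro n m k hk p q
  refine Prod.ext ?_ (Prod.ext ?_ ?_)
  · simp [Ed, kmap, cupE]
  · simp [Ed, kmap, cupE]
  · rcases Int.even_or_odd n with h | h
    · simp only [Ed, kmap, cupE, map_add, map_sub, map_neg, map_smul, map_zero,
        LinearMap.map_smul_of_tower, map_zsmul,
        LinearMap.add_apply, LinearMap.sub_apply, LinearMap.neg_apply,
        LinearMap.smul_apply, LinearMap.map_smul, cupC.leib n m k hk,
        Int.negOnePow_succ, Units.val_neg, neg_smul, smul_neg, smul_add, smul_sub,
        Int.cast_neg, Prod.smul_mk, Prod.mk_add_mk, Prod.mk_sub_mk, Prod.neg_mk, Prod.snd_add, Prod.snd_neg, Prod.fst_add, Prod.fst_neg,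
        Int.negOnePow_even n h, Units.val_one, one_smul, neg_neg]
      module
    · simp only [Ed, kmap, cupE, map_add, map_sub, map_neg, map_smul, map_zero,
        LinearMap.map_smul_of_tower, map_zsmul,
        LinearMap.add_apply, LinearMap.sub_apply, LinearMap.neg_apply,
        LinearMap.smul_apply, LinearMap.map_smul, cupC.leib n m k hk,
        Int.negOnePow_succ, Units.val_neg, neg_smul, smul_neg, smul_add, smul_sub,
        Int.cast_neg, Prod.smul_mk, Prod.mk_add_mk, Prod.mk_sub_mk, Prod.neg_mk, Prod.snd_add, Prod.snd_neg, Prod.fst_add, Prod.fst_neg,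
        Int.negOnePow_odd n h, Units.val_one, one_smul, neg_neg]
      module
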